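/- arXiv:1505.07886 — 4 statements merged into one kernel-verified Lean document; each statement's English description precedes it below -/
import Mathlib

section
/- Let φ ∈ GL(2,ℤ). Then b₁(Γ_{φ^r}) = 1 for all nonzero integers r if and only if φ is hyperbolic, where b₁(Γ_ψ) denotes the rank of the abelianization of F₂ ⋊_ψ ℤ. Concretely (using b₁(Γ_ψ) = 1 ⟺ 1 + det ψ ≠ tr ψ): for all r ≠ 0, 1 + det(φ^r) ≠ tr(φ^r), if and only if φ has infinite order and an eigenvalue of absolute value > 1. -/
/-!
`1 + det ψ = tr ψ` says that `1` is a root of the characteristic polynomial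
`x² - tr ψ x + det ψ`, whose other root is then `det ψ = ±1`. If `φ` has a real eigenvalue `μ`
with `|μ| > 1`, then `φ ^ r` has the eigenvalue `μ ^ r` with `|μ ^ r| ≠ 1`, which is neither of
these roots. Conversely, put `t = tr φ` and `d = det φ`. The power `r = 1` excludes `t = 1 + d`
and `r = 2` excludes `t² = 2 + 2d`; for `d = 1, |t| ≤ 1` the eigenvalues are roots of unity and
`φ ^ 12 = 1`. What remains is `1 + d < |t|`: the characteristic polynomial is negative at
`sign t`, so it has a real root beyond it.
-/

open Matrix Polynomial

theorem pow_twelve_eq_one_of_sq_eq {R : Type*} [Ring R] {a : R} {t : ℤ} (ht : |t| ≤ 1)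
    (ha : a ^ 2 = t • a - 1) : a ^ 12 = 1 := by
  obtain rfl | rfl | rfl : t = -1 ∨ t = 0 ∨ t = 1 := by rw [abs_le] at ht; omega
  · have h3 : a ^ 3 = 1 := by
      rw [pow_succ', ha, neg_one_zsmul, mul_sub, mul_neg, ← sq, ha, neg_one_zsmul]; noncomm_ring
    rw [show 12 = 3 * 4 by rfl, pow_mul, h3, one_pow]
  · rw [zero_smul, zero_sub] at ha
    rw [show 12 = 2 * 6 by rfl, pow_mul, ha]; norm_num
  · have h3 : a ^ 3 = -1 := by
      rw [pow_succ', ha, one_zsmul, mul_sub, ← sq, ha, one_zsmul]; noncomm_ring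
    rw [show 12 = 3 * 4 by rfl, pow_mul, h3]; norm_num

theorem exists_one_lt_abs_root_of_one_add_lt_abs {t d : ℝ} (h : 1 + d < |t|) :
    ∃ μ : ℝ, 1 < |μ| ∧ μ ^ 2 - t * μ + d = 0 := by
  have hdisc : (2 - |t|) ^ 2 < t ^ 2 - 4 * d := by nlinarith [sq_abs t]
  have hsqrt : 2 - |t| < √(t ^ 2 - 4 * d) := Real.lt_sqrt_of_sq_lt hdisc
  have hsq : √(t ^ 2 - 4 * d) ^ 2 = t ^ 2 - 4 * d :=
    Real.sq_sqrt (by nlinarith [sq_nonneg (2 - |t|)])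
  rcases le_total 0 t with ht | ht
  · rw [abs_of_nonneg ht] at hsqrt
    refine ⟨(t + √(t ^ 2 - 4 * d)) / 2, ?_, by linear_combination hsq / 4⟩
    rw [abs_of_pos] <;> linarith
  · rw [abs_of_nonpos ht] at hsqrt
    refine ⟨(t - √(t ^ 2 - 4 * d)) / 2, ?_, by linear_combination hsq / 4⟩
    rw [abs_of_neg] <;> linarith

theorem Int.cast_trace {R : Type*} [AddCommGroupWithOne R] {n : Type*} [Fintype n]
    (M : Matrix n n ℤ) :
    (M.trace : R) = (M.map fun x ↦ (x : R)).trace :=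
  AddMonoidHom.map_trace (Int.castAddHom R) M

namespace Matrix

section Field

variable {K : Type*} [Field K] {n : Type*} [Fintype n] [DecidableEq n]

theorem exists_mulVec_eq_smul_iff_isRoot_charpoly (M : Matrix n n K) (μ : K) :
    (∃ v ≠ 0, M *ᵥ v = μ • v) ↔ M.charpoly.IsRoot μ := by
  rw [IsRoot, eval_charpoly, ← exists_mulVec_eq_zero_iff]
  simp only [ne_eq, scalar_apply, sub_mulVec, diagonal_const_mulVec, sub_eq_zero, eq_comm]

theorem GeneralLinearGroup.zpow_mulVec_eq_smul {g : GL n K} {μ : K} {v : n → K} (hμ : μ ≠ 0)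
    (h : (g : Matrix n n K) *ᵥ v = μ • v) (r : ℤ) :
    ((g ^ r : GL n K) : Matrix n n K) *ᵥ v = μ ^ r • v := by
  have hinv : ((g⁻¹ : GL n K) : Matrix n n K) *ᵥ v = μ⁻¹ • v := by
    calc ((g⁻¹ : GL n K) : Matrix n n K) *ᵥ v
        = μ⁻¹ • ((g⁻¹ : GL n K) : Matrix n n K) *ᵥ (μ • v) := by
          rw [mulVec_smul, smul_smul, inv_mul_cancel₀ hμ, one_smul]
      _ = μ⁻¹ • v := by
          rw [← h, mulVec_mulVec, ← Units.val_mul, inv_mul_cancel, Units.val_one, one_mulVec]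
  induction r using Int.induction_on with
  | zero => simp
  | succ r ih =>
    rw [_root_.zpow_add_one, Units.val_mul, ← mulVec_mulVec, h, mulVec_smul, ih, smul_smul,
      zpow_add_one₀ hμ, mul_comm]
  | pred r ih =>
    rw [_root_.zpow_sub_one, Units.val_mul, ← mulVec_mulVec, hinv, mulVec_smul, ih, smul_smul,
      zpow_sub_one₀ hμ, mul_comm]

end Field

section FinTwo

variable {R : Type*} [CommRing R]

theorem sq_eq_trace_smul_sub_det_smul (A : Matrix (Fin 2) (Fin 2) R) :
    A ^ 2 = A.trace • A - A.det • 1 := by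
  nontriviality R
  have := aeval_self_charpoly A
  simp only [charpoly_fin_two, map_add, aeval_sub, map_pow, aeval_X, map_mul, aeval_C,
    Algebra.algebraMap_eq_smul_one, Algebra.smul_mul_assoc, one_mul] at this
  rw [← sub_eq_zero, ← this]
  abel

theorem trace_sq_fin_two (A : Matrix (Fin 2) (Fin 2) R) :
    (A ^ 2).trace = A.trace ^ 2 - 2 * A.det := by
  rw [sq_eq_trace_smul_sub_det_smul, trace_sub, trace_smul, trace_smul, trace_one,
    Fintype.card_fin, smul_eq_mul, smul_eq_mul]
  ring

theorem isRoot_charpoly_fin_two [Nontrivial R] (A : Matrix (Fin 2) (Fin 2) R) (μ : R) :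
    A.charpoly.IsRoot μ ↔ μ ^ 2 - A.trace * μ + A.det = 0 := by
  simp [charpoly_fin_two]

theorem one_add_det_ne_trace_of_isRoot_charpoly {K : Type*} [Field K]
    {A : Matrix (Fin 2) (Fin 2) K} {μ : K} (hμ : A.charpoly.IsRoot μ) (h1 : μ ≠ 1)
    (hdet : μ ≠ A.det) : 1 + A.det ≠ A.trace := by
  intro h
  rw [isRoot_charpoly_fin_two, ← h] at hμ
  exact mul_ne_zero (sub_ne_zero.2 h1) (sub_ne_zero.2 hdet) (by linear_combination hμ)

end FinTwo

theorem one_add_det_lt_abs_trace {A : Matrix (Fin 2) (Fin 2) ℤ} (hdet : |A.det| = 1)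
    (h1 : 1 + A.det ≠ A.trace) (h2 : 1 + (A ^ 2).det ≠ (A ^ 2).trace) (hA : ¬IsOfFinOrder A) :
    1 + A.det < |A.trace| := by
  rw [det_pow, trace_sq_fin_two] at h2
  by_contra! hle
  rcases (abs_eq zero_le_one).1 hdet with hd | hd <;> rw [hd] at h1 h2 hle
  · rcases (show |A.trace| ≤ 1 ∨ A.trace = 2 ∨ A.trace = -2 by rw [abs_le] at hle ⊢; omega)
      with ht | ht | ht
    · refine hA (isOfFinOrder_iff_pow_eq_one.2 ⟨12, by norm_num, ?_⟩)
      exact pow_twelve_eq_one_of_sq_eq ht (by rw [sq_eq_trace_smul_sub_det_smul, hd, one_smul])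
    · exact h1 (by rw [ht]; norm_num)
    · exact h2 (by rw [ht]; norm_num)
  · rw [abs_nonpos_iff.1 (by linarith : |A.trace| ≤ 0)] at h2
    norm_num at h2

namespace GeneralLinearGroup

theorem abs_det_eq_one {n : Type*} [Fintype n] [DecidableEq n] (g : GL n ℤ) :
    |(g : Matrix n n ℤ).det| = 1 :=
  Int.isUnit_iff_abs_eq.1 ((isUnit_iff_isUnit_det _).1 g.isUnit)

theorem one_add_det_ne_trace_of_mulVec_eq_smul (g : GL (Fin 2) ℤ) {μ : ℝ} (hμ : |μ| ≠ 1)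
    {v : Fin 2 → ℝ} (hv : v ≠ 0)
    (h : (g : Matrix (Fin 2) (Fin 2) ℤ).map (Int.cast : ℤ → ℝ) *ᵥ v = μ • v) :
    1 + (g : Matrix (Fin 2) (Fin 2) ℤ).det ≠ (g : Matrix (Fin 2) (Fin 2) ℤ).trace := by
  have hroot := (exists_mulVec_eq_smul_iff_isRoot_charpoly _ μ).1 ⟨v, hv, h⟩
  have := one_add_det_ne_trace_of_isRoot_charpoly hroot (by rintro rfl; simp at hμ) (by
    rintro rfl
    exact hμ (by rw [← Int.cast_det]; exact_mod_cast abs_det_eq_one g))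
  rw [← Int.cast_det, ← Int.cast_trace] at this
  exact_mod_cast this

end GeneralLinearGroup

end Matrix

theorem betti_one_all_powers_iff_hyperbolic (φ : GL (Fin 2) ℤ) :
    (∀ r : ℤ, r ≠ 0 →
        1 + Matrix.det ((φ ^ r : GL (Fin 2) ℤ) : Matrix (Fin 2) (Fin 2) ℤ) ≠
          Matrix.trace ((φ ^ r : GL (Fin 2) ℤ) : Matrix (Fin 2) (Fin 2) ℤ)) ↔
      (¬ IsOfFinOrder φ ∧
        ∃ μ : ℝ, 1 < |μ| ∧ ∃ v : Fin 2 → ℝ, v ≠ 0 ∧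
          ((φ : Matrix (Fin 2) (Fin 2) ℤ).map (Int.cast : ℤ → ℝ)).mulVec v = μ • v) := by
  set A := (φ : Matrix (Fin 2) (Fin 2) ℤ)
  constructor
  · intro h
    have hfin : ¬IsOfFinOrder φ := fun hφ ↦ by
      obtain ⟨n, hn, hφn⟩ := isOfFinOrder_iff_pow_eq_one.1 hφ
      have := h n (by exact_mod_cast hn.ne')
      norm_num [hφn] at this
    have hlt := one_add_det_lt_abs_trace (GeneralLinearGroup.abs_det_eq_one φ)
      (by simpa using h 1 one_ne_zero) (by simpa using h 2 two_ne_zero)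
      (Units.isOfFinOrder_val.not.2 hfin)
    obtain ⟨μ, hμ, hroot⟩ :=
      exists_one_lt_abs_root_of_one_add_lt_abs (t := A.trace) (d := A.det) <| by
        exact_mod_cast hlt
    obtain ⟨v, hv, hmv⟩ := (exists_mulVec_eq_smul_iff_isRoot_charpoly _ μ).2 <| by
      rwa [isRoot_charpoly_fin_two, ← Int.cast_det, ← Int.cast_trace]
    exact ⟨hfin, μ, hμ, v, hv, hmv⟩
  · rintro ⟨-, μ, hμ, v, hv, hmv⟩ r hr
    refine GeneralLinearGroup.one_add_det_ne_trace_of_mulVec_eq_smul (φ ^ r) (μ := μ ^ r)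
      ?_ hv ?_
    · rw [abs_zpow]
      exact (zpow_eq_one_iff_right₀ (abs_nonneg μ) hμ.ne').not.2 hr
    · have := GeneralLinearGroup.zpow_mulVec_eq_smul
        (g := GeneralLinearGroup.map (Int.castRingHom ℝ) φ) (abs_pos.1 (one_pos.trans hμ)) hmv r
      rwa [← map_zpow] at this
end

section
/- Up to conjugacy in GL(2,ℤ), the only matrix with trace 3 and determinant 1 is [[2,1],[1,1]]: every φ ∈ GL(2,ℤ) with tr φ = 3 and det φ = 1 is conjugate in GL(2,ℤ) to [[2,1],[1,1]]. -/
/-!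
Everything happens in `SL(2, ℤ)`. For `g = [[a, b], [c, d]]` of trace 3 the discriminant identity
`(a - d)² + 4bc = 5` shows `c ≠ 0`. Conjugating by `T ^ k` keeps `c` and shifts `a - d` by `2kc`,
so we may assume `|a - d| ≤ |c|`; then `4|bc| ≤ max 4 (c² - 5)`, hence `|b| < |c|` when `|c| ≥ 2`
and `b = c` when `|c| = 1`. Conjugating by `S` replaces `c` by `-b`, so `|c|` descends until
`c = 1`, where a single conjugation by a power of `T` reaches `[[2, 1], [1, 1]]`.
-/

open Matrix Matrix.SpecialLinearGroup ModularGroup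
open scoped MatrixGroups

lemma Matrix.SpecialLinearGroup.trace_eq_of_isConj {n R : Type*} [Fintype n] [DecidableEq n]
    [CommRing R] {g h : SpecialLinearGroup n R} (hgh : IsConj g h) :
    trace (g : Matrix n n R) = trace (h : Matrix n n R) := by
  obtain ⟨c, rfl⟩ := isConj_iff.mp hgh
  exact (trace_units_conj (toGL c) g).symm

lemma Matrix.SpecialLinearGroup.det_fin_two_coe {R : Type*} [CommRing R] (g : SL(2, R)) :
    g 0 0 * g 1 1 - g 0 1 * g 1 0 = 1 := by
  rw [← det_fin_two, det_coe]

lemma Int.exists_abs_add_two_mul_le (t : ℤ) {c : ℤ} (hc : c ≠ 0) :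
    ∃ k : ℤ, |t + 2 * k * c| ≤ |c| := by
  set k := -round ((t : ℚ) / (2 * c))
  refine ⟨k, ?_⟩
  have hc' : (c : ℚ) ≠ 0 := by exact_mod_cast hc
  have hcast : ((t + 2 * k * c : ℤ) : ℚ)
      = 2 * c * ((t : ℚ) / (2 * c) - round ((t : ℚ) / (2 * c))) := by
    push_cast [k]
    field_simp
    ring
  have : |((t + 2 * k * c : ℤ) : ℚ)| ≤ |(c : ℚ)| := by
    rw [hcast, abs_mul, abs_mul, abs_two]
    nlinarith [abs_sub_round ((t : ℚ) / (2 * c)), abs_nonneg (c : ℚ)]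
  exact_mod_cast this

namespace ModularGroup

lemma coe_T_zpow_conj (g : SL(2, ℤ)) (k : ℤ) :
    ↑(T ^ k * g * (T ^ k)⁻¹) = !![g 0 0 + k * g 1 0, g 0 1 + k * (g 1 1 - g 0 0) - k ^ 2 * g 1 0;
      g 1 0, g 1 1 - k * g 1 0] := by
  rw [coe_mul, coe_mul, coe_inv, coe_T_zpow, adjugate_fin_two_of, eta_fin_two (g : Matrix _ _ ℤ)]
  simp only [mul_fin_two]
  congrm !![?_, ?_; ?_, ?_] <;> simp <;> ring

lemma coe_S_conj (g : SL(2, ℤ)) : ↑(S * g * S⁻¹) = !![g 1 1, -g 1 0; -g 0 1, g 0 0] := by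
  rw [coe_mul, coe_mul, coe_inv, coe_S, adjugate_fin_two_of, eta_fin_two (g : Matrix _ _ ℤ)]
  simp only [mul_fin_two]
  congrm !![?_, ?_; ?_, ?_] <;> simp

def catMap : SL(2, ℤ) := ⟨!![2, 1; 1, 1], by norm_num [det_fin_two_of]⟩

section TraceThree

variable {g : SL(2, ℤ)}

lemma discr_eq_five_of_trace_eq_three (htr : trace (g : Matrix (Fin 2) (Fin 2) ℤ) = 3) :
    (g 0 0 - g 1 1) ^ 2 + 4 * (g 0 1 * g 1 0) = 5 := by
  rw [trace_fin_two] at htr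
  linear_combination (g 0 0 + g 1 1 + 3) * htr - 4 * det_fin_two_coe g

lemma lower_left_ne_zero_of_trace_eq_three (htr : trace (g : Matrix (Fin 2) (Fin 2) ℤ) = 3) :
    g 1 0 ≠ 0 := by
  intro hc
  rw [trace_fin_two] at htr
  have hdet := det_fin_two_coe g
  rw [hc, mul_zero, sub_zero] at hdet
  rcases Int.eq_one_or_neg_one_of_mul_eq_one' hdet with ⟨ha, hd⟩ | ⟨ha, hd⟩ <;> omega

lemma abs_upper_right_lt_of_trace_eq_three (htr : trace (g : Matrix (Fin 2) (Fin 2) ℤ) = 3)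
    (hred : |g 0 0 - g 1 1| ≤ |g 1 0|) (hc : 2 ≤ |g 1 0|) : |g 0 1| < |g 1 0| := by
  have hdisc := discr_eq_five_of_trace_eq_three htr
  rw [trace_fin_two] at htr
  have hodd : 1 ≤ (g 0 0 - g 1 1) ^ 2 := by
    have : g 0 0 - g 1 1 ≠ 0 := by omega
    nlinarith [Int.one_le_abs this, sq_abs (g 0 0 - g 1 1)]
  have hsq : (g 0 0 - g 1 1) ^ 2 ≤ g 1 0 ^ 2 := sq_le_sq.mpr hred
  have hc2 : 4 ≤ g 1 0 ^ 2 := by nlinarith [sq_abs (g 1 0)]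
  have hbc : |g 0 1 * g 1 0| < g 1 0 ^ 2 := abs_lt.mpr ⟨by linarith, by linarith⟩
  rw [abs_mul, ← sq_abs (g 1 0)] at hbc
  nlinarith [abs_nonneg (g 0 1)]

lemma upper_right_eq_lower_left_of_trace_eq_three
    (htr : trace (g : Matrix (Fin 2) (Fin 2) ℤ) = 3)
    (hred : |g 0 0 - g 1 1| ≤ |g 1 0|) (hc : |g 1 0| = 1) : g 0 1 = g 1 0 := by
  have hdisc := discr_eq_five_of_trace_eq_three htr
  rw [trace_fin_two] at htr
  have hsq : (g 0 0 - g 1 1) ^ 2 = 1 := by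
    have : g 0 0 - g 1 1 ≠ 0 := by omega
    rw [← sq_abs, le_antisymm (hred.trans_eq hc) (Int.one_le_abs this), one_pow]
  rcases (abs_eq zero_le_one).mp hc with hc' | hc' <;> rw [hc'] at hdisc ⊢ <;> linarith

lemma isConj_catMap_of_lower_left_eq_one (htr : trace (g : Matrix (Fin 2) (Fin 2) ℤ) = 3)
    (hc : g 1 0 = 1) : IsConj g catMap := by
  rw [trace_fin_two] at htr
  have hdet := det_fin_two_coe g
  rw [hc, mul_one] at hdet
  refine isConj_iff.mpr ⟨T ^ (2 - g 0 0), Subtype.ext ?_⟩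
  rw [coe_T_zpow_conj, hc]
  change _ = !![2, 1; 1, 1]
  congrm !![?_, ?_; ?_, ?_]
  · ring
  · linear_combination 2 * htr - hdet
  · rfl
  · linear_combination htr

end TraceThree

lemma exists_isConj_abs_sub_le (g : SL(2, ℤ)) (hc : g 1 0 ≠ 0) :
    ∃ h : SL(2, ℤ), IsConj g h ∧ h 1 0 = g 1 0 ∧ |h 0 0 - h 1 1| ≤ |h 1 0| := by
  obtain ⟨k, hk⟩ := Int.exists_abs_add_two_mul_le (g 0 0 - g 1 1) hc
  refine ⟨T ^ k * g * (T ^ k)⁻¹, isConj_iff.mpr ⟨_, rfl⟩, ?_, ?_⟩ <;>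
    simp only [coe_T_zpow_conj, of_apply, cons_val', cons_val_zero, cons_val_one, empty_val',
      cons_val_fin_one]
  convert hk using 2
  ring

theorem isConj_catMap_of_trace_eq_three (g : SL(2, ℤ))
    (htr : trace (g : Matrix (Fin 2) (Fin 2) ℤ) = 3) : IsConj g catMap := by
  induction hn : (g 1 0).natAbs using Nat.strong_induction_on generalizing g with
  | _ n ih =>
  have hc0 := lower_left_ne_zero_of_trace_eq_three htr
  obtain ⟨h, hgh, hc, hred⟩ := exists_isConj_abs_sub_le g hc0
  have htrh := trace_eq_of_isConj hgh ▸ htr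
  have hSh : IsConj h (S * h * S⁻¹) := isConj_iff.mpr ⟨S, rfl⟩
  have htrS := trace_eq_of_isConj hSh ▸ htrh
  have hSc : (S * h * S⁻¹) 1 0 = -h 0 1 := by
    rw [coe_S_conj]
    simp
  rcases (Int.one_le_abs hc0).eq_or_lt with habs | habs
  · rcases (abs_eq zero_le_one).mp habs.symm with hc1 | hc1
    · exact isConj_catMap_of_lower_left_eq_one htr hc1
    have hb := upper_right_eq_lower_left_of_trace_eq_three htrh hred (hc ▸ habs.symm)
    refine hgh.trans (hSh.trans (isConj_catMap_of_lower_left_eq_one htrS ?_))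
    rw [hSc, hb, hc, hc1, neg_neg]
  · have hb := abs_upper_right_lt_of_trace_eq_three htrh hred (hc ▸ habs)
    refine hgh.trans (hSh.trans (ih _ ?_ _ htrS rfl))
    rw [Int.abs_eq_natAbs, Int.abs_eq_natAbs, hc] at hb
    rw [← hn, hSc, Int.natAbs_neg]
    omega

end ModularGroup

theorem trace_three_det_one_unique_conj (φ : GL (Fin 2) ℤ)
    (htr : Matrix.trace (φ : Matrix (Fin 2) (Fin 2) ℤ) = 3)
    (hdet : Matrix.det (φ : Matrix (Fin 2) (Fin 2) ℤ) = 1) :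
    ∃ P : GL (Fin 2) ℤ,
      ((P * φ * P⁻¹ : GL (Fin 2) ℤ) : Matrix (Fin 2) (Fin 2) ℤ) = !![2, 1; 1, 1] := by
  obtain ⟨P, hP⟩ := isConj_iff.mp <|
    toGL.map_isConj (isConj_catMap_of_trace_eq_three ⟨φ, hdet⟩ htr)
  exact ⟨P, by rw [show φ = toGL ⟨φ, hdet⟩ from Units.ext rfl, hP]; rfl⟩
end

section
/- Every φ ∈ GL(2,ℤ) with trace 1 and determinant −1 is conjugate in GL(2,ℤ) to the matrix [[1,1],[1,0]]. -/
/-!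
Conjugation by elementary matrices preserves trace and determinant, which allows a Euclidean
descent on `!![a, b; c, d]` with `a + d = 1`, `a * d - b * c = -1` and `0 < c`. Conjugating by
`!![1, n; 0, 1]` replaces `a` by its residue modulo `c`, after which the determinant condition
forces `-c < b < 0`; swapping the basis vectors and negating one of them then yields a matrix of the
same kind with lower-left entry `-b`, strictly smaller than `c`. When `c = 1` a single translation
reaches `!![1, 1; 1, 0]`. The entry `c` never vanishes because `x ^ 2 - x - 1` has no integer root.
-/

section Moves

variable {R : Type*} [CommRing R]

theorem isConj_of_translate {a b c d a' b' d' : R} (n : R) (ha : a' = a + n * c)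
    (hb : b' = b + n * (d - a) - n ^ 2 * c) (hd : d' = d - n * c) :
    IsConj !![a, b; c, d] !![a', b'; c, d'] := by
  refine ⟨⟨!![1, n; 0, 1], !![1, -n; 0, 1], ?_, ?_⟩, ?_⟩
  · simp [Matrix.one_fin_two]
  · simp [Matrix.one_fin_two]
  · subst ha hb hd
    ext i j
    fin_cases i <;> fin_cases j <;> simp <;> ring

theorem isConj_swap (a b c d : R) : IsConj !![a, b; c, d] !![d, c; b, a] := by
  refine ⟨⟨!![0, 1; 1, 0], !![0, 1; 1, 0], ?_, ?_⟩, ?_⟩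
  · simp [Matrix.one_fin_two]
  · simp [Matrix.one_fin_two]
  · ext i j
    fin_cases i <;> fin_cases j <;> simp

theorem isConj_neg_offDiag (a b c d : R) : IsConj !![a, b; c, d] !![a, -b; -c, d] := by
  refine ⟨⟨!![1, 0; 0, -1], !![1, 0; 0, -1], ?_, ?_⟩, ?_⟩
  · simp [Matrix.one_fin_two]
  · simp [Matrix.one_fin_two]
  · ext i j
    fin_cases i <;> fin_cases j <;> simp

end Moves

theorem mul_ne_zero_of_add_eq_one_of_mul_sub_mul_eq_neg_one {a b c d : ℤ} (htr : a + d = 1)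
    (hdet : a * d - b * c = -1) : b * c ≠ 0 := by
  intro h
  have had : a * -d = 1 := by linear_combination -hdet - h
  rcases Int.eq_one_or_neg_one_of_mul_eq_one' had with ⟨rfl, _⟩ | ⟨rfl, _⟩ <;> omega

theorem upperRight_mem_Ioo_of_reduced {a b c : ℤ} (hc : 2 ≤ c) (ha0 : 0 ≤ a) (hac : a < c)
    (hdet : a * (1 - a) - b * c = -1) : b ∈ Set.Ioo (-c) 0 := by
  have hb0 : b ≠ 0 := left_ne_zero_of_mul
    (mul_ne_zero_of_add_eq_one_of_mul_sub_mul_eq_neg_one (by ring) hdet)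
  have hbc_lt : b * c < c := by
    obtain rfl | ha1 : a = 0 ∨ 1 ≤ a := by omega
    · linarith
    · nlinarith
  have hbc_gt : -c * c < b * c := by nlinarith
  have hb1 : b < 1 := lt_of_mul_lt_mul_right (by linarith : b * c < 1 * c) (by omega)
  exact ⟨lt_of_mul_lt_mul_right hbc_gt (by omega), by omega⟩

theorem isConj_fibonacci_of_pos {a b c d : ℤ} (htr : a + d = 1) (hdet : a * d - b * c = -1)
    (hc : 0 < c) : IsConj !![a, b; c, d] !![1, 1; 1, 0] := by
  obtain rfl | hc2 : c = 1 ∨ 2 ≤ c := by omega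
  · exact isConj_of_translate (1 - a) (by ring) (by linear_combination hdet - htr) (by linarith)
  obtain rfl : d = 1 - a := by linarith
  obtain ⟨q, a', rfl, ha'0, ha'c⟩ : ∃ q a', a = a' + q * c ∧ 0 ≤ a' ∧ a' < c :=
    ⟨a / c, a % c, by linarith [Int.mul_ediv_add_emod a c], Int.emod_nonneg _ hc.ne',
      Int.emod_lt_of_pos _ hc⟩
  obtain ⟨b', hb'⟩ : ∃ b', b' = b - q * (1 - (a' + q * c) - (a' + q * c)) - q ^ 2 * c := ⟨_, rfl⟩
  have hT : IsConj !![a' + q * c, b; c, 1 - (a' + q * c)] !![a', b'; c, 1 - a'] :=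
    isConj_of_translate (-q) (by ring) (by rw [hb']; ring) (by linarith)
  have hdet' : a' * (1 - a') - b' * c = -1 := by
    rw [hb']; linear_combination hdet
  obtain ⟨hb'gt, hb'lt⟩ := upperRight_mem_Ioo_of_reduced hc2 ha'0 ha'c hdet'
  have hrec : IsConj !![1 - a', -c; -b', a'] !![1, 1; 1, 0] :=
    isConj_fibonacci_of_pos (by ring) (by linear_combination hdet') (by omega)
  exact hT.trans ((isConj_swap _ _ _ _).trans ((isConj_neg_offDiag _ _ _ _).trans hrec))
termination_by c.natAbs
decreasing_by omega

theorem trace_one_det_neg_one_unique_conj (φ : GL (Fin 2) ℤ)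
    (htr : Matrix.trace (φ : Matrix (Fin 2) (Fin 2) ℤ) = 1)
    (hdet : Matrix.det (φ : Matrix (Fin 2) (Fin 2) ℤ) = -1) :
    ∃ P : GL (Fin 2) ℤ,
      ((P * φ * P⁻¹ : GL (Fin 2) ℤ) : Matrix (Fin 2) (Fin 2) ℤ) = !![1, 1; 1, 0] := by
  set M : Matrix (Fin 2) (Fin 2) ℤ := ↑φ
  rw [Matrix.trace_fin_two] at htr
  rw [Matrix.det_fin_two] at hdet
  have hc := right_ne_zero_of_mul (mul_ne_zero_of_add_eq_one_of_mul_sub_mul_eq_neg_one htr hdet)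
  have hM : IsConj M !![1, 1; 1, 0] := by
    rw [M.eta_fin_two]
    rcases hc.lt_or_gt with hc | hc
    · exact (isConj_neg_offDiag _ _ _ _).trans
        (isConj_fibonacci_of_pos htr (by linear_combination hdet) (by omega))
    · exact isConj_fibonacci_of_pos htr hdet hc
  obtain ⟨P, hP⟩ := hM
  exact ⟨P, by rw [Units.val_mul, Units.val_mul, Units.mul_inv_eq_iff_eq_mul]; exact hP⟩
end

section
/- The fundamental groups of the figure-eight knot complement and the trefoil knot complement have non-isomorphic profinite completions; indeed they have different sets of finite quotients, since ⟨x,y | yxy⁻¹xy = xyx⁻¹yx⟩ surjects onto D₁₀ while ⟨a,b | a² = b³⟩ does not. -/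
/-- The relator of the figure-eight knot group
`⟨x, y | y x y⁻¹ x y = x y x⁻¹ y x⟩`. -/
def figEightRel : FreeGroup (Fin 2) :=
  (FreeGroup.of 1 * FreeGroup.of 0 * (FreeGroup.of 1)⁻¹ * FreeGroup.of 0 * FreeGroup.of 1) *
    (FreeGroup.of 0 * FreeGroup.of 1 * (FreeGroup.of 0)⁻¹ * FreeGroup.of 1 * FreeGroup.of 0)⁻¹

/-- The figure-eight knot group `Π = ⟨x, y | y x y⁻¹ x y = x y x⁻¹ y x⟩`. -/
abbrev FigEightGroup := PresentedGroup ({figEightRel} : Set (FreeGroup (Fin 2)))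

/-- The relator of the trefoil knot group `⟨a, b | a² = b³⟩`. -/
def trefoilRel : FreeGroup (Fin 2) :=
  (FreeGroup.of 0) ^ 2 * ((FreeGroup.of 1) ^ 3)⁻¹

/-- The trefoil knot group `T = ⟨a, b | a² = b³⟩`. -/
abbrev TrefoilGroup := PresentedGroup ({trefoilRel} : Set (FreeGroup (Fin 2)))

/-!
`D₁₀` is generated by the two reflections `sr 0` and `sr 1`, and sending `x, y` to them respects
the figure-eight relator. For the trefoil, in any group generated by `a, b` with `a² = b³` the
element `a² = b³` is central. In `D₁₀` the centre is trivial, so `b³ = 1`, hence `b = 1` as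
`3 ∤ 10`; then `a` alone generates, so `a` is central as well and the image is trivial.
-/

open Subgroup DihedralGroup

section GeneratedByTwo

variable {G : Type*} [Group G]

theorem Subgroup.mem_center_of_closure_eq_top {s : Set G} (hs : closure s = ⊤) {z : G}
    (hz : ∀ g ∈ s, g * z = z * g) : z ∈ center G := by
  rw [← centralizer_univ, ← coe_top, ← hs, centralizer_closure]
  exact mem_centralizer_iff.2 hz

theorem pow_mem_center_of_closure_pair_eq_top {a b : G} {m n : ℕ} (hab : closure {a, b} = ⊤)
    (hpow : a ^ m = b ^ n) : a ^ m ∈ center G := by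
  refine mem_center_of_closure_eq_top hab ?_
  rintro g (rfl | rfl)
  · exact (pow_mul_comm' g m).symm
  · rw [hpow]; exact (pow_mul_comm' g n).symm

theorem subsingleton_of_closure_pair_eq_top (hcenter : center G = ⊥) {n : ℕ}
    (hcop : (Nat.card G).Coprime n) {a b : G} {m : ℕ} (hab : closure {a, b} = ⊤)
    (hpow : a ^ m = b ^ n) : Subsingleton G := by
  have hbn : b ^ n = 1 := by
    rw [← hpow, ← mem_bot, ← hcenter]
    exact pow_mem_center_of_closure_pair_eq_top hab hpow
  have hb : b = 1 := hcop.pow_left_bijective.injective (by rw [hbn, one_pow])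
  have ha_top : closure {a} = ⊤ := by
    rwa [hb, Set.pair_comm, closure_insert_one] at hab
  have ha : a = 1 := by
    rw [← mem_bot, ← hcenter]
    exact mem_center_of_closure_eq_top ha_top (by rintro g rfl; rfl)
  rw [ha, closure_singleton_one] at ha_top
  exact subsingleton_iff.mp (subsingleton_of_bot_eq_top ha_top)

end GeneratedByTwo

theorem PresentedGroup.range_eq_closure_pair {G : Type*} [Group G]
    {rels : Set (FreeGroup (Fin 2))} (f : PresentedGroup rels →* G) :
    f.range = closure {f (of 0), f (of 1)} := by
  rw [MonoidHom.range_eq_map, ← closure_range_of, MonoidHom.map_closure, ← Set.range_comp]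
  congr 1
  ext
  simp [Fin.exists_fin_two, eq_comm]

theorem DihedralGroup.closure_sr_zero_sr_one {n : ℕ} :
    closure {sr 0, sr 1} = (⊤ : Subgroup (DihedralGroup n)) := by
  have hsr0 : sr 0 ∈ closure {(sr 0 : DihedralGroup n), sr 1} := subset_closure (.inl rfl)
  have hr : ∀ i : ZMod n, r i ∈ closure {(sr 0 : DihedralGroup n), sr 1} := by
    intro i
    have hr1 : r 1 ∈ closure {(sr 0 : DihedralGroup n), sr 1} := by
      have hsr1 : sr 1 ∈ closure {(sr 0 : DihedralGroup n), sr 1} :=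
        subset_closure (Set.mem_insert_of_mem _ rfl)
      simpa only [sr_mul_sr, sub_zero] using mul_mem hsr0 hsr1
    rw [← ZMod.intCast_zmod_cast i, ← r_one_zpow]
    exact zpow_mem hr1 _
  rw [eq_top_iff]
  rintro (i | i) -
  · exact hr i
  · rw [← zero_add i, ← sr_mul_r]
    exact mul_mem hsr0 (hr i)

theorem trefoilGroup_of_zero_sq_eq_of_one_cube :
    (PresentedGroup.of 0 : TrefoilGroup) ^ 2 = PresentedGroup.of 1 ^ 3 :=
  PresentedGroup.mk_eq_mk_of_mul_inv_mem (Set.mem_singleton trefoilRel)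

theorem trefoilGroup_not_surjective {G : Type*} [Group G] [Nontrivial G] (hcenter : center G = ⊥)
    (hcop : (Nat.card G).Coprime 3) (f : TrefoilGroup →* G) : ¬ Function.Surjective f := by
  intro hf
  have hgen : closure {f (PresentedGroup.of 0), f (PresentedGroup.of 1)} = ⊤ := by
    rw [← PresentedGroup.range_eq_closure_pair, MonoidHom.range_eq_top.2 hf]
  have hpow : f (PresentedGroup.of 0) ^ 2 = f (PresentedGroup.of 1) ^ 3 := by
    rw [← map_pow, ← map_pow, trefoilGroup_of_zero_sq_eq_of_one_cube]
  have := subsingleton_of_closure_pair_eq_top hcenter hcop hgen hpow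
  exact false_of_nontrivial_of_subsingleton G

/-- `x ↦ sr 0`, `y ↦ sr 1`: both sides of the relation map to `sr 3`. -/
def figEightToDihedral : FigEightGroup →* DihedralGroup 5 :=
  PresentedGroup.toGroup (f := ![sr 0, sr 1]) (by rintro _ rfl; decide)

theorem figEightToDihedral_surjective : Function.Surjective figEightToDihedral := by
  rw [← MonoidHom.range_eq_top, PresentedGroup.range_eq_closure_pair]
  exact closure_sr_zero_sr_one

theorem figEight_trefoil_different_finite_quotients :
    (∃ f : FigEightGroup →* DihedralGroup 5, Function.Surjective f) ∧
    (¬ ∃ f : TrefoilGroup →* DihedralGroup 5, Function.Surjective f) ∧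
    ¬ (∀ (Q : Type) [Group Q] [Finite Q],
        (∃ f : FigEightGroup →* Q, Function.Surjective f) ↔
        (∃ g : TrefoilGroup →* Q, Function.Surjective g)) := by
  have hfig : ∃ f : FigEightGroup →* DihedralGroup 5, Function.Surjective f :=
    ⟨figEightToDihedral, figEightToDihedral_surjective⟩
  have htrefoil : ¬ ∃ f : TrefoilGroup →* DihedralGroup 5, Function.Surjective f :=
    fun ⟨f, hf⟩ => trefoilGroup_not_surjective
      (center_eq_bot_of_odd_ne_one (by decide) (by decide)) (by rw [nat_card]; norm_num) f hf
  exact ⟨hfig, htrefoil, fun h => htrefoil ((h _).1 hfig)⟩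
end
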